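/- Greedy optimality for the fully relaxed stationary search problem: with a stationary target, multiplicative search updates b(x) ← (1-q(x))·b(x), and no reachability constraint (any vertex may be searched at each step), the schedule that at each of T steps searches a vertex maximizing q(v)·b(v) (with the current belief b) minimizes the objective Σ_{t=1}^T Σ_{v} b(v, t) over all length-T search schedules, when each vertex may be searched at most once. -/

import Mathlib

/-!
Searching a vertex that has not been searched before removes exactly `q v * b0 v` from the total
mass, so for a schedule of distinct vertices the mass after `t + 1` steps is
`∑ v, b0 v - ∑ i ≤ t, q (s i) * b0 (s i)`. Minimizing the objective therefore amounts to
maximizing, for every `t`, the static weight `w = q * b0` of the first `t + 1` searched vertices,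
and the greedy schedule maximizes each of these prefix weights simultaneously.
-/

/-- Belief evolution for a stationary target: at step `t` the searched vertex `s t` has its
belief multiplied by `(1 - q (s t))`; all other beliefs are unchanged. -/
def statEvol {V : Type*} [Fintype V] [DecidableEq V]
    (q : V → ℝ) (b0 : V → ℝ) (s : ℕ → V) : ℕ → V → ℝ
  | 0 => b0
  | t + 1 => fun v =>
      if v = s t then (1 - q (s t)) * statEvol q b0 s t v else statEvol q b0 s t v

open Finset

section GreedyPrefix

variable {V β : Type*} [DecidableEq V] [AddCommMonoid β] [LinearOrder β] [IsOrderedAddMonoid β]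

theorem sum_le_sum_range_of_greedy (w : V → β) (T : ℕ) (g : ℕ → V)
    (hg : ∀ t < T, ∀ v, (∀ i < t, g i ≠ v) → w v ≤ w (g t))
    (S : Finset V) (hS : #S ≤ T) :
    ∑ v ∈ S, w v ≤ ∑ i ∈ range #S, w (g i) := by
  induction S using Finset.strongInduction with
  | H S ih =>
  rcases S.eq_empty_or_nonempty with rfl | hne
  · simp
  obtain ⟨k, hk⟩ : ∃ k, #S = k + 1 := Nat.exists_eq_succ_of_ne_zero hne.card_pos.ne'
  obtain ⟨v, hvS, hv⟩ : ∃ v ∈ S, w v ≤ w (g k) := by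
    by_cases hgk : g k ∈ S
    · exact ⟨g k, hgk, le_rfl⟩
    have hnsub : ¬S ⊆ (range k).image g := fun hsub => by
      have := (card_le_card hsub).trans card_image_le
      simp only [card_range] at this
      omega
    obtain ⟨v, hvS, hvg⟩ := not_subset.mp hnsub
    refine ⟨v, hvS, hg k (by omega) v fun i hi hgi => hvg ?_⟩
    exact mem_image.mpr ⟨i, mem_range.mpr hi, hgi⟩
  have hcard : #(S.erase v) = k := by rw [card_erase_of_mem hvS, hk]; rfl
  calc ∑ x ∈ S, w x = ∑ x ∈ S.erase v, w x + w v := (sum_erase_add _ _ hvS).symm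
    _ ≤ ∑ i ∈ range k, w (g i) + w (g k) := by
        gcongr
        simpa [hcard] using ih _ (erase_ssubset hvS) (by omega)
    _ = ∑ i ∈ range #S, w (g i) := by rw [hk, sum_range_succ]

theorem sum_range_le_sum_range_of_greedy (w : V → β) (T : ℕ) (g : ℕ → V)
    (hg : ∀ t < T, ∀ v, (∀ i < t, g i ≠ v) → w v ≤ w (g t))
    (s : ℕ → V) (hs : Set.InjOn s (Set.Iio T)) (k : ℕ) (hk : k ≤ T) :
    ∑ i ∈ range k, w (s i) ≤ ∑ i ∈ range k, w (g i) := by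
  have hinj : Set.InjOn s (range k) := hs.mono fun i hi => by
    simp only [coe_range, Set.mem_Iio] at hi ⊢
    omega
  have hcard : #((range k).image s) = k := by rw [card_image_of_injOn hinj, card_range]
  rw [← sum_image hinj]
  simpa [hcard] using sum_le_sum_range_of_greedy w T g hg _ (hcard.trans_le hk)

end GreedyPrefix

section StatEvol

variable {V : Type*} [Fintype V] [DecidableEq V] (q b0 : V → ℝ) (s : ℕ → V)

theorem statEvol_of_forall_ne {t : ℕ} {v : V} (h : ∀ i < t, s i ≠ v) :
    statEvol q b0 s t v = b0 v := by
  induction t with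
  | zero => rfl
  | succ t ih =>
    have hv : v ≠ s t := fun hv => h t t.lt_succ_self hv.symm
    simp only [statEvol, if_neg hv]
    exact ih fun i hi => h i (Nat.lt_succ_of_lt hi)

theorem statEvol_apply_self_of_injOn {T : ℕ} (hs : Set.InjOn s (Set.Iio T)) {t : ℕ}
    (ht : t < T) : statEvol q b0 s t (s t) = b0 (s t) :=
  statEvol_of_forall_ne q b0 s fun i hi hst => by
    have := hs (Set.mem_Iio.mpr (hi.trans ht)) (Set.mem_Iio.mpr ht) hst
    omega

theorem sum_statEvol_succ (t : ℕ) :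
    ∑ v, statEvol q b0 s (t + 1) v =
      ∑ v, statEvol q b0 s t v - q (s t) * statEvol q b0 s t (s t) := by
  have hstep : ∀ v, statEvol q b0 s (t + 1) v
      = statEvol q b0 s t v - if v = s t then q (s t) * statEvol q b0 s t v else 0 := by
    intro v
    by_cases h : v = s t
    · subst h; simp only [statEvol, if_true]; ring
    · simp only [statEvol, if_neg h, sub_zero]
  simp only [hstep, sum_sub_distrib, sum_ite_eq', mem_univ, if_true]

theorem sum_statEvol_succ_of_injOn {T : ℕ} (hs : Set.InjOn s (Set.Iio T)) {t : ℕ}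
    (ht : t < T) :
    ∑ v, statEvol q b0 s (t + 1) v =
      ∑ v, b0 v - ∑ i ∈ range (t + 1), q (s i) * b0 (s i) := by
  induction t with
  | zero => rw [sum_statEvol_succ]; simp [statEvol]
  | succ t ih =>
    rw [sum_statEvol_succ, ih (by omega), statEvol_apply_self_of_injOn q b0 s hs ht,
      sum_range_succ _ (t + 1)]
    ring

/-- Before step `t` only `g 0, …, g (t - 1)` have been searched, so at the candidates for `g t`
the current beliefs are still the initial ones. -/
theorem greedy_initial_weight_of_greedy {T : ℕ} {g : ℕ → V} (hginj : Set.InjOn g (Set.Iio T))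
    (hgreedy : ∀ t < T, ∀ v : V,
      q v * statEvol q b0 g t v ≤ q (g t) * statEvol q b0 g t (g t)) :
    ∀ t < T, ∀ v, (∀ i < t, g i ≠ v) → q v * b0 v ≤ q (g t) * b0 (g t) := by
  intro t ht v hv
  simpa only [statEvol_of_forall_ne q b0 g hv, statEvol_apply_self_of_injOn q b0 g hginj ht]
    using hgreedy t ht v

end StatEvol

theorem greedy_optimal_relaxed_general {V : Type*} [Fintype V] [DecidableEq V]
    (q : V → ℝ)
    (b0 : V → ℝ)
    (T : ℕ) (g : ℕ → V) (hginj : Set.InjOn g (Set.Iio T))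
    (hgreedy : ∀ t < T, ∀ v : V,
      q v * statEvol q b0 g t v ≤ q (g t) * statEvol q b0 g t (g t)) :
    ∀ s : ℕ → V, Set.InjOn s (Set.Iio T) →
      ∑ t ∈ Finset.range T, ∑ v, statEvol q b0 g (t + 1) v ≤
        ∑ t ∈ Finset.range T, ∑ v, statEvol q b0 s (t + 1) v := by
  intro s hs
  refine sum_le_sum fun t ht => ?_
  have ht : t < T := mem_range.mp ht
  rw [sum_statEvol_succ_of_injOn q b0 g hginj ht, sum_statEvol_succ_of_injOn q b0 s hs ht]
  have hprefix := sum_range_le_sum_range_of_greedy (fun v => q v * b0 v) T g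
    (greedy_initial_weight_of_greedy q b0 hginj hgreedy) s hs (t + 1) ht
  linarith

/-- Greedy optimality for the fully relaxed stationary search problem: with a stationary
target, multiplicative search updates, no reachability constraint, and each vertex searched
at most once, the schedule `g` that at each of the `T` steps searches a vertex maximizing
`q v * b v` (with respect to the current belief) minimizes the objective
`Σ_{t=1}^T Σ_v b(v,t)` over all length-`T` schedules of distinct vertices. -/
theorem greedy_optimal_relaxed {V : Type*} [Fintype V] [DecidableEq V]
    (q : V → ℝ) (hq : ∀ v, 0 ≤ q v ∧ q v ≤ 1)
    (b0 : V → ℝ) (hb0 : ∀ v, 0 ≤ b0 v)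
    (T : ℕ) (g : ℕ → V) (hginj : Set.InjOn g (Set.Iio T))
    (hgreedy : ∀ t < T, ∀ v : V,
      q v * statEvol q b0 g t v ≤ q (g t) * statEvol q b0 g t (g t)) :
    ∀ s : ℕ → V, Set.InjOn s (Set.Iio T) →
      ∑ t ∈ Finset.range T, ∑ v, statEvol q b0 g (t + 1) v ≤
        ∑ t ∈ Finset.range T, ∑ v, statEvol q b0 s (t + 1) v :=
  greedy_optimal_relaxed_general q b0 T g hginj hgreedy
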